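/- Suppose each individual belongs to at most two VR categories and any individual with two memberships has e among them. Then a choice rule satisfies non-wastefulness, no justified envy, compliance with VR protections, and respects mobility from reparatory categories to EWS if and only if it is the sequential choice rule that processes the open category first, category e second, and the remaining VR categories afterwards (in any order). -/

import Mathlib

attribute [local instance] Classical.propDecidable

noncomputable section

variable {ι R : Type*} [Fintype ι] [DecidableEq ι] [Fintype R] [DecidableEq R]

/-- Eligibility sets: everyone is eligible for the open category (`none`),
and `elig c` is the set of members of VR-protected category `c`. -/
def eligOf (elig : R → Finset ι) : Option R → Finset ι
  | none => (Finset.univ : Finset ι)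
  | some c => elig c

/-- Aggregate choice: all individuals chosen across all categories. -/
def aggC (C : Finset ι → Option R → Finset ι) (I : Finset ι) : Finset ι :=
  Finset.univ.biUnion fun v => C I v

/-- `C` is a choice rule for capacities `q` and eligibility `elig`: each category chooses
eligible applicants up to capacity, and no individual is chosen by two categories. -/
def IsChoiceRule (q : Option R → ℕ) (elig : R → Finset ι)
    (C : Finset ι → Option R → Finset ι) : Prop :=
  ∀ I : Finset ι,
    (∀ v, C I v ⊆ I ∩ eligOf elig v) ∧
    (∀ v, (C I v).card ≤ q v) ∧
    (∀ v v', v ≠ v' → Disjoint (C I v) (C I v'))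

/-- Non-wastefulness: no position remains idle while an eligible applicant is unchosen. -/
def NonWasteful (q : Option R → ℕ) (elig : R → Finset ι)
    (C : Finset ι → Option R → Finset ι) : Prop :=
  ∀ (I : Finset ι) (v : Option R) (j : ι),
    j ∈ I → j ∉ aggC C I → (C I v).card < q v → j ∉ eligOf elig v

/-- No justified envy: a chosen individual outscores every eligible entirely-unchosen applicant. -/
def NoJustifiedEnvy (σ : ι → ℝ) (elig : R → Finset ι)
    (C : Finset ι → Option R → Finset ι) : Prop :=
  ∀ (I : Finset ι) (v : Option R) (i j : ι),
    i ∈ C I v → j ∈ I → j ∈ eligOf elig v → j ∉ aggC C I → σ j < σ i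

/-- Compliance with VR protections: a VR recipient implies the open category is full, with
every open-category recipient scoring strictly higher. -/
def CompliesVR (σ : ι → ℝ) (q : Option R → ℕ)
    (C : Finset ι → Option R → Finset ι) : Prop :=
  ∀ (I : Finset ι) (c : R) (i : ι), i ∈ C I (some c) →
    (C I none).card = q none ∧ ∀ j ∈ C I none, σ i < σ j

/-- The (at most) `k` highest merit-score members of `S`. -/
def topK (σ : ι → ℝ) (S : Finset ι) (k : ℕ) : Finset ι :=
  S.filter fun i => (S.filter fun j => σ i ≤ σ j).card ≤ k

/-- The Over-and-Above choice rule: open positions go to the top-merit applicants; then each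
VR category's quota is filled by the highest-merit remaining eligible members. -/
def OA (σ : ι → ℝ) (q : Option R → ℕ) (elig : R → Finset ι)
    (I : Finset ι) : Option R → Finset ι
  | none => topK σ I (q none)
  | some c => topK σ ((I \ topK σ I (q none)) ∩ elig c) (q (some c))

/-- The sequential choice rule: categories are processed in the order given by the list,
each filling its positions by serial dictatorship on the remaining eligible applicants. -/
def seqAssign (σ : ι → ℝ) (q : Option R → ℕ) (elig : R → Finset ι) :
    List (Option R) → Finset ι → Option R → Finset ι
  | [], _, _ => ∅
  | v :: rest, I, u =>
    let chosen := topK σ (I ∩ eligOf elig v) (q v)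
    if u = v then chosen else seqAssign σ q elig rest (I \ chosen) u

/-- Eligibility sets induced by a membership profile `ρ`. -/
def eligρ (ρ : ι → Finset R) (c : R) : Finset ι :=
  Finset.univ.filter fun i => c ∈ ρ i

/-- Respect for mobility from reparatory categories to EWS: if an `e`-eligible individual
receives a position at a caste-based category, then category `e` is full and all of its
recipients have strictly higher merit. -/
def RespectsMobility (σ : ι → ℝ) (q : Option R → ℕ) (elig : R → Finset ι) (e : R)
    (C : Finset ι → Option R → Finset ι) : Prop :=
  ∀ (I : Finset ι) (c : R) (i : ι), c ≠ e → i ∈ C I (some c) → i ∈ elig e →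
    (C I (some e)).card = q (some e) ∧ ∀ j ∈ C I (some e), σ i < σ j

/-! Under the membership hypothesis the eligibility sets of the categories other than `e` are
pairwise disjoint, so after the open category and `e` the processing order no longer matters, and
the sequential rule is the unique rule in which every category takes, by merit and up to capacity,
the applicants not taken by the categories processed before it (`ewsFirstPool`).

Given the axioms, each category's choice is the merit-top part of its pool: a pool member it passes
over is either unassigned, and then non-wastefulness and no justified envy apply, or assigned to a
later category, which compliance with VR protections (for the open category), respect for mobility
(for `e`) and disjointness (for the others) allow only when the category is full of higher-merit
recipients. Conversely, with distinct scores a merit-top selection is full as soon as it leaves out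
an eligible applicant, which gives the axioms for the sequential rule. -/

section TopK

variable {ι : Type*} {σ : ι → ℝ} {S T : Finset ι} {k : ℕ} {i j : ι}

/-- The position of `i` in `S` ranked by decreasing merit, ties counted against `i`. -/
def meritRank (σ : ι → ℝ) (S : Finset ι) (i : ι) : ℕ :=
  (S.filter fun j => σ i ≤ σ j).card

lemma mem_topK : i ∈ topK σ S k ↔ i ∈ S ∧ meritRank σ S i ≤ k :=
  Finset.mem_filter

lemma topK_subset : topK σ S k ⊆ S :=
  Finset.filter_subset _ _

lemma meritRank_mem_Icc (hi : i ∈ S) : meritRank σ S i ∈ Finset.Icc 1 S.card :=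
  Finset.mem_Icc.mpr ⟨Finset.card_pos.mpr ⟨i, Finset.mem_filter.mpr ⟨hi, le_rfl⟩⟩,
    Finset.card_filter_le _ _⟩

lemma meritRank_lt_meritRank (hi : i ∈ S) (hij : σ i < σ j) :
    meritRank σ S j < meritRank σ S i := by
  refine Finset.card_lt_card ⟨fun l hl => ?_, fun hsub => ?_⟩
  · simp only [Finset.mem_filter] at hl ⊢
    exact ⟨hl.1, hij.le.trans hl.2⟩
  · have := (Finset.mem_filter.mp (hsub (Finset.mem_filter.mpr ⟨hi, le_rfl⟩))).2
    exact absurd hij this.not_gt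

lemma injOn_meritRank (hσ : Set.InjOn σ S) : Set.InjOn (meritRank σ S) S := by
  intro i hi j hj hij
  rcases lt_trichotomy (σ i) (σ j) with h | h | h
  · exact absurd hij (meritRank_lt_meritRank hi h).ne'
  · exact hσ hi hj h
  · exact absurd hij (meritRank_lt_meritRank hj h).ne

lemma image_meritRank (hσ : Set.InjOn σ S) : S.image (meritRank σ S) = Finset.Icc 1 S.card := by
  refine Finset.eq_of_subset_of_card_le (fun m hm => ?_) ?_
  · obtain ⟨i, hi, rfl⟩ := Finset.mem_image.mp hm
    exact meritRank_mem_Icc hi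
  · rw [Finset.card_image_of_injOn (injOn_meritRank hσ), Nat.card_Icc, Nat.add_sub_cancel]

lemma lt_of_notMem_topK (hi : i ∈ S) (hni : i ∉ topK σ S k) (hj : j ∈ topK σ S k) :
    σ i < σ j := by
  by_contra! hji
  refine hni (mem_topK.mpr ⟨hi, (Finset.card_le_card fun l hl => ?_).trans (mem_topK.mp hj).2⟩)
  simp only [Finset.mem_filter] at hl ⊢
  exact ⟨hl.1, hji.trans hl.2⟩

lemma card_topK_of_notMem (hσ : Set.InjOn σ S) (hi : i ∈ S) (hni : i ∉ topK σ S k) :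
    (topK σ S k).card = k := by
  have hk : k ≤ S.card := by
    have := (Finset.mem_Icc.mp (meritRank_mem_Icc (σ := σ) hi)).2
    have : k < meritRank σ S i := lt_of_not_ge fun h => hni (mem_topK.mpr ⟨hi, h⟩)
    omega
  calc (topK σ S k).card = (Finset.Icc 1 k).card := by
        refine Finset.card_nbij (meritRank σ S) (fun j hj => ?_)
          ((injOn_meritRank hσ).mono (Finset.coe_subset.mpr topK_subset)) (fun m hm => ?_)
        · exact Finset.mem_Icc.mpr ⟨(Finset.mem_Icc.mp (meritRank_mem_Icc (topK_subset hj))).1,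
            (mem_topK.mp hj).2⟩
        · obtain ⟨hm1, hmk⟩ := Finset.mem_Icc.mp hm
          have : m ∈ S.image (meritRank σ S) := by
            rw [image_meritRank hσ]
            exact Finset.mem_Icc.mpr ⟨hm1, hmk.trans hk⟩
          obtain ⟨j, hj, rfl⟩ := Finset.mem_image.mp this
          exact ⟨j, mem_topK.mpr ⟨hj, hmk⟩, rfl⟩
    _ = k := by simp

lemma eq_topK_of_forall_lt (hTS : T ⊆ S) (hcard : T.card ≤ k)
    (hlt : ∀ i ∈ S, i ∉ T → ∀ j ∈ T, σ i < σ j) (hfull : T.card < k → S ⊆ T) :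
    T = topK σ S k := by
  ext i
  refine ⟨fun hi => mem_topK.mpr ⟨hTS hi, (Finset.card_le_card fun l hl => ?_).trans hcard⟩,
    fun hi => ?_⟩
  · obtain ⟨hlS, hil⟩ := Finset.mem_filter.mp hl
    by_contra hlT
    exact (hlt l hlS hlT i hi).not_ge hil
  · obtain ⟨hiS, hrank⟩ := mem_topK.mp hi
    by_contra hiT
    have hTk : T.card = k := by
      by_contra hne
      exact hiT (hfull (lt_of_le_of_ne hcard hne) hiS)
    have hsub : insert i T ⊆ S.filter fun j => σ i ≤ σ j := by
      intro j hj
      rcases Finset.mem_insert.mp hj with rfl | hjT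
      · exact Finset.mem_filter.mpr ⟨hiS, le_rfl⟩
      · exact Finset.mem_filter.mpr ⟨hTS hjT, (hlt i hiS hiT j hjT).le⟩
    have := Finset.card_le_card hsub
    rw [Finset.card_insert_of_notMem hiT] at this
    exact absurd (this.trans hrank) (by omega)

end TopK

section Sequential

variable {ι R : Type*} {σ : ι → ℝ} {q : Option R → ℕ} {elig : R → Finset ι} {e : R}
  {C D : Finset ι → Option R → Finset ι} {I : Finset ι}

@[simp]
lemma eligOf_none [Fintype ι] (elig : R → Finset ι) : eligOf elig none = Finset.univ :=
  rfl

@[simp]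
lemma eligOf_some [Fintype ι] (elig : R → Finset ι) (c : R) : eligOf elig (some c) = elig c :=
  rfl

lemma mem_aggC [DecidableEq ι] [Fintype R] {i : ι} : i ∈ aggC C I ↔ ∃ v, i ∈ C I v := by
  simp [aggC]

lemma eq_topK_of_nonWasteful_of_noJustifiedEnvy [Fintype ι] [DecidableEq ι] [Fintype R]
    (hNW : NonWasteful q elig C) (hNJE : NoJustifiedEnvy σ elig C) {v : Option R} {P : Finset ι}
    (hcard : (C I v).card ≤ q v) (hCP : C I v ⊆ P) (hP : P ⊆ I ∩ eligOf elig v)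
    (hlater : ∀ i ∈ P, i ∉ C I v → i ∈ aggC C I →
      (C I v).card = q v ∧ ∀ j ∈ C I v, σ i < σ j) :
    C I v = topK σ P (q v) := by
  refine eq_topK_of_forall_lt hCP hcard (fun i hiP hiC j hj => ?_) (fun hlt i hiP => ?_)
  all_goals obtain ⟨hiI, hiv⟩ := Finset.mem_inter.mp (hP hiP)
  · by_cases hagg : i ∈ aggC C I
    · exact (hlater i hiP hiC hagg).2 j hj
    · exact hNJE I v j i hj hiI hiv hagg
  · by_contra hiC
    by_cases hagg : i ∈ aggC C I
    · exact hlt.ne (hlater i hiP hiC hagg).1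
    · exact hNW I v i hiI hagg hlt hiv

lemma seqAssign_cons_self [Fintype ι] [DecidableEq ι] [DecidableEq R] (v : Option R)
    (rest : List (Option R)) (I : Finset ι) :
    seqAssign σ q elig (v :: rest) I v = topK σ (I ∩ eligOf elig v) (q v) := by
  simp [seqAssign]

lemma seqAssign_cons_of_ne [Fintype ι] [DecidableEq ι] [DecidableEq R] {u v : Option R}
    (h : u ≠ v) (rest : List (Option R)) (I : Finset ι) :
    seqAssign σ q elig (v :: rest) I u =
      seqAssign σ q elig rest (I \ topK σ (I ∩ eligOf elig v) (q v)) u := by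
  simp [seqAssign, h]

/-- Processing categories whose eligibility sets are disjoint from that of `c` does not change
the applicants available to `c`. -/
lemma seqAssign_map_some [Fintype ι] [DecidableEq ι] [DecidableEq R] {c : R} {M : List R}
    (hc : c ∈ M) (hdisj : ∀ d ∈ M, d ≠ c → Disjoint (elig d) (elig c)) (J : Finset ι) :
    seqAssign σ q elig (M.map some) J (some c) = topK σ (J ∩ elig c) (q (some c)) := by
  induction M generalizing J with
  | nil => simp at hc
  | cons d rest ih =>
    rcases eq_or_ne c d with rfl | hcd
    · exact seqAssign_cons_self _ _ J
    rw [List.map_cons, seqAssign_cons_of_ne (Option.some_injective _ |>.ne hcd),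
      ih (List.mem_of_ne_of_mem hcd hc) fun d' hd' => hdisj d' (List.mem_cons_of_mem _ hd'),
      Finset.sdiff_inter_right_comm, Finset.sdiff_eq_self_of_disjoint]
    have hd : topK σ (J ∩ eligOf elig (some d)) (q (some d)) ⊆ elig d :=
      topK_subset.trans Finset.inter_subset_right
    exact Disjoint.mono Finset.inter_subset_right hd (hdisj d List.mem_cons_self hcd.symm).symm

variable [DecidableEq ι] [DecidableEq R]

/-- The applicants left for category `v` when the open category is filled first, `e` second and
every other category after them. -/
def ewsFirstPool (elig : R → Finset ι) (e : R) (C : Finset ι → Option R → Finset ι)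
    (I : Finset ι) : Option R → Finset ι
  | none => I
  | some c =>
    if c = e then (I \ C I none) ∩ elig c else ((I \ C I none) \ C I (some e)) ∩ elig c

def IsEwsFirstSequential (σ : ι → ℝ) (q : Option R → ℕ) (elig : R → Finset ι) (e : R)
    (C : Finset ι → Option R → Finset ι) : Prop :=
  ∀ I v, C I v = topK σ (ewsFirstPool elig e C I v) (q v)

lemma isEwsFirstSequential_seqAssign [Fintype ι] {L : List R}
    (hdisj : ({e}ᶜ : Set R).PairwiseDisjoint elig) (he : e ∉ L)
    (hL : ∀ c, c ≠ e → c ∈ L) :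
    IsEwsFirstSequential σ q elig e
      (seqAssign σ q elig ((none : Option R) :: some e :: L.map some)) := by
  intro I v
  rcases v with _ | c
  · simp [seqAssign_cons_self, ewsFirstPool]
  rcases eq_or_ne c e with rfl | hce
  · simp [seqAssign_cons_of_ne, seqAssign_cons_self, ewsFirstPool]
  have hdisjL : ∀ d ∈ L, d ≠ c → Disjoint (elig d) (elig c) := fun d hd hdc =>
    hdisj (Set.mem_compl_singleton_iff.mpr fun hde => he (hde ▸ hd))
      (Set.mem_compl_singleton_iff.mpr hce) hdc
  rw [seqAssign_cons_of_ne (by simp), seqAssign_cons_of_ne (by simpa using hce),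
    seqAssign_map_some (hL c hce) hdisjL]
  simp [seqAssign_cons_self, seqAssign_cons_of_ne, ewsFirstPool, hce]

lemma IsEwsFirstSequential.unique (hC : IsEwsFirstSequential σ q elig e C)
    (hD : IsEwsFirstSequential σ q elig e D) : C = D := by
  funext I v
  have hopen : C I none = D I none := by rw [hC, hD]; rfl
  have hews : C I (some e) = D I (some e) := by
    rw [hC, hD]; simp only [ewsFirstPool, if_pos, hopen]
  rw [hC, hD]
  rcases v with _ | c
  · rfl
  · simp only [ewsFirstPool, hopen, hews]

lemma ewsFirstPool_subset [Fintype ι] (v : Option R) :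
    ewsFirstPool elig e C I v ⊆ I ∩ eligOf elig v := by
  intro x hx
  rcases v with _ | c
  · simpa [ewsFirstPool] using hx
  · simp only [ewsFirstPool] at hx
    split_ifs at hx <;> simp_all

lemma ewsFirstPool_some_subset (c : R) : ewsFirstPool elig e C I (some c) ⊆ I \ C I none := by
  simp only [ewsFirstPool]
  split_ifs
  · exact Finset.inter_subset_left
  · exact Finset.inter_subset_left.trans Finset.sdiff_subset

lemma IsChoiceRule.subset_ewsFirstPool [Fintype ι] (hC : IsChoiceRule q elig C) (I : Finset ι)
    (v : Option R) : C I v ⊆ ewsFirstPool elig e C I v := by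
  obtain ⟨hsub, -, hdj⟩ := hC I
  intro x hx
  have hx' := Finset.mem_inter.mp (hsub v hx)
  have hnotin : ∀ v', v' ≠ v → x ∉ C I v' := fun v' hv' =>
    Finset.disjoint_right.mp (hdj _ _ hv') hx
  rcases v with _ | c
  · exact hx'.1
  · simp only [ewsFirstPool]
    split_ifs with hce
    · simpa [hnotin none (by simp)] using hx'
    · simpa [hnotin none (by simp), hnotin (some e) (by simpa using Ne.symm hce)] using hx'

lemma isEwsFirstSequential_of_axioms [Fintype ι] [Fintype R] (hC : IsChoiceRule q elig C)
    (hdisj : ({e}ᶜ : Set R).PairwiseDisjoint elig) (hNW : NonWasteful q elig C)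
    (hNJE : NoJustifiedEnvy σ elig C) (hVR : CompliesVR σ q C)
    (hRM : RespectsMobility σ q elig e C) :
    IsEwsFirstSequential σ q elig e C := by
  intro I v
  refine eq_topK_of_nonWasteful_of_noJustifiedEnvy hNW hNJE ((hC I).2.1 v)
    (hC.subset_ewsFirstPool I v) (ewsFirstPool_subset v) fun i hiP hiv hagg => ?_
  obtain ⟨v', hiv'⟩ := mem_aggC.mp hagg
  have hv' : v' ≠ v := by rintro rfl; exact hiv hiv'
  rcases v with _ | c
  · obtain _ | c' := v'
    · exact absurd rfl hv'
    · exact hVR I c' i hiv'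
  obtain _ | c' := v'
  · exact absurd hiv' (Finset.mem_sdiff.mp (ewsFirstPool_some_subset c hiP)).2
  have hc'c : c' ≠ c := fun h => hv' (h ▸ rfl)
  by_cases hce : c = e
  · subst hce
    simp only [ewsFirstPool, if_pos] at hiP
    exact hRM I c' i hc'c hiv' (Finset.mem_inter.mp hiP).2
  · simp only [ewsFirstPool, if_neg hce, Finset.mem_inter, Finset.mem_sdiff] at hiP
    obtain ⟨⟨-, hie⟩, hic⟩ := hiP
    have hc'e : c' ≠ e := by rintro rfl; exact absurd hiv' hie
    have hic' : i ∈ elig c' := (Finset.mem_inter.mp ((hC I).1 (some c') hiv')).2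
    exact (Finset.disjoint_left.mp
      (hdisj (Set.mem_compl_singleton_iff.mpr hc'e) (Set.mem_compl_singleton_iff.mpr hce) hc'c)
      hic' hic).elim

lemma mem_ewsFirstPool_of_notMem_aggC [Fintype ι] [Fintype R] {v : Option R} {j : ι}
    (hjI : j ∈ I) (hjv : j ∈ eligOf elig v) (hj : j ∉ aggC C I) :
    j ∈ ewsFirstPool elig e C I v := by
  have hnot : ∀ v', j ∉ C I v' := fun v' h => hj (mem_aggC.mpr ⟨v', h⟩)
  rcases v with _ | c
  · exact hjI
  · change j ∈ elig c at hjv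
    simp only [ewsFirstPool]
    split_ifs <;> simp [hjI, hjv, hnot]

namespace IsEwsFirstSequential

lemma lt_of_mem_ewsFirstPool (hD : IsEwsFirstSequential σ q elig e C) {v : Option R} {i j : ι}
    (hi : i ∈ ewsFirstPool elig e C I v) (hiv : i ∉ C I v) (hj : j ∈ C I v) :
    σ i < σ j := by
  rw [hD I v] at hiv hj
  exact lt_of_notMem_topK hi hiv hj

lemma card_eq_of_mem_ewsFirstPool (hD : IsEwsFirstSequential σ q elig e C)
    (hσ : Function.Injective σ) {v : Option R} {i : ι}
    (hi : i ∈ ewsFirstPool elig e C I v) (hiv : i ∉ C I v) : (C I v).card = q v := by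
  rw [hD I v] at hiv ⊢
  exact card_topK_of_notMem hσ.injOn hi hiv

lemma nonWasteful [Fintype ι] [Fintype R] (hD : IsEwsFirstSequential σ q elig e C)
    (hσ : Function.Injective σ) : NonWasteful q elig C := by
  intro I v j hjI hjagg hlt hjv
  exact hlt.ne (hD.card_eq_of_mem_ewsFirstPool hσ (mem_ewsFirstPool_of_notMem_aggC hjI hjv hjagg)
    fun h => hjagg (mem_aggC.mpr ⟨v, h⟩))

lemma noJustifiedEnvy [Fintype ι] [Fintype R] (hD : IsEwsFirstSequential σ q elig e C) :
    NoJustifiedEnvy σ elig C := by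
  intro I v i j hi hjI hjv hjagg
  exact hD.lt_of_mem_ewsFirstPool (mem_ewsFirstPool_of_notMem_aggC hjI hjv hjagg)
    (fun h => hjagg (mem_aggC.mpr ⟨v, h⟩)) hi

lemma compliesVR (hD : IsEwsFirstSequential σ q elig e C) (hσ : Function.Injective σ) :
    CompliesVR σ q C := by
  intro I c i hi
  have hiP : i ∈ ewsFirstPool elig e C I (some c) := by
    rw [hD I] at hi
    exact topK_subset hi
  obtain ⟨hiI, hi0⟩ := Finset.mem_sdiff.mp (ewsFirstPool_some_subset c hiP)
  exact ⟨hD.card_eq_of_mem_ewsFirstPool hσ (v := none) hiI hi0,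
    fun j => hD.lt_of_mem_ewsFirstPool (v := none) hiI hi0⟩

lemma respectsMobility (hD : IsEwsFirstSequential σ q elig e C) (hσ : Function.Injective σ) :
    RespectsMobility σ q elig e C := by
  intro I c i hce hi hie
  have hiP : i ∈ ewsFirstPool elig e C I (some c) := by
    rw [hD I] at hi
    exact topK_subset hi
  simp only [ewsFirstPool, if_neg hce, Finset.mem_inter, Finset.mem_sdiff] at hiP
  obtain ⟨⟨hi0, hie'⟩, -⟩ := hiP
  have hiPe : i ∈ ewsFirstPool elig e C I (some e) := by
    simp only [ewsFirstPool, if_pos, Finset.mem_inter, Finset.mem_sdiff]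
    exact ⟨hi0, hie⟩
  exact ⟨hD.card_eq_of_mem_ewsFirstPool hσ hiPe hie',
    fun j => hD.lt_of_mem_ewsFirstPool hiPe hie'⟩

end IsEwsFirstSequential

end Sequential

lemma pairwiseDisjoint_eligρ {ι R : Type*} [Fintype ι] [DecidableEq R] {ρ : ι → Finset R}
    {e : R} (hρ : ∀ i, (ρ i).card ≤ 2 ∧ ((ρ i).card = 2 → e ∈ ρ i)) :
    ({e}ᶜ : Set R).PairwiseDisjoint (eligρ ρ) := by
  intro c hc c' hc' hcc'
  refine Finset.disjoint_left.mpr fun i hi hi' => ?_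
  simp only [eligρ, Finset.mem_filter, Finset.mem_univ, true_and] at hi hi'
  have hcard : (ρ i).card = 2 :=
    le_antisymm (hρ i).1 (Finset.one_lt_card.mpr ⟨c, hi, c', hi', hcc'⟩)
  have := Finset.two_lt_card.mpr ⟨c, hi, c', hi', e, (hρ i).2 hcard, hcc', hc, hc'⟩
  omega

/-- with each individual in at most two VR categories, `e` being one of any
two, a choice rule satisfies the three basic axioms and respects mobility from reparatory
categories to EWS iff it is the sequential rule processing open first, `e` second, and the
remaining VR categories afterwards (in any order). -/
theorem ewsFirst_characterization (σ : ι → ℝ) (hσ : Function.Injective σ)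
    (q : Option R → ℕ) (e : R) (ρ : ι → Finset R)
    (hρ : ∀ i, (ρ i).card ≤ 2 ∧ ((ρ i).card = 2 → e ∈ ρ i))
    (C : Finset ι → Option R → Finset ι) (hC : IsChoiceRule q (eligρ ρ) C) :
    (NonWasteful q (eligρ ρ) C ∧ NoJustifiedEnvy σ (eligρ ρ) C ∧
        CompliesVR σ q C ∧ RespectsMobility σ q (eligρ ρ) e C) ↔
      ∃ L : List R, L.Nodup ∧ e ∉ L ∧ (∀ c : R, c ≠ e → c ∈ L) ∧
        C = seqAssign σ q (eligρ ρ) ((none : Option R) :: some e :: L.map some) := by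
  have hdisj := pairwiseDisjoint_eligρ hρ
  constructor
  · rintro ⟨hNW, hNJE, hVR, hRM⟩
    let L := (Finset.univ.erase e).toList
    have heL : e ∉ L := by simp [L]
    have hL : ∀ c, c ≠ e → c ∈ L := by simp [L]
    exact ⟨L, Finset.nodup_toList _, heL, hL,
      (isEwsFirstSequential_of_axioms hC hdisj hNW hNJE hVR hRM).unique
        (isEwsFirstSequential_seqAssign hdisj heL hL)⟩
  · rintro ⟨L, -, heL, hL, rfl⟩
    have hD := isEwsFirstSequential_seqAssign (σ := σ) (q := q) hdisj heL hL
    exact ⟨hD.nonWasteful hσ, hD.noJustifiedEnvy, hD.compliesVR hσ, hD.respectsMobility hσ⟩
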